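/- The expected number of adjacent equalities in a uniformly random k-multiset of {1,...,n} equals k(k-1)/(n+k-1), and its variance equals k(k-1)n(n-1)/((n+k-1)^2(n+k-2)). -/

import Mathlib

/-- The set of weakly decreasing `k`-tuples with entries in `{1,...,n}`. -/
def multisetTuples (n k : ℕ) : Finset (Fin k → ℕ) :=
  (Fintype.piFinset fun _ : Fin k => Finset.Icc 1 n).filter
    fun ℓ => ∀ i j : Fin k, i ≤ j → ℓ j ≤ ℓ i

/-- The number of adjacent equalities `ℓ_j = ℓ_{j+1}` in a tuple. -/
def sigmaEq {k : ℕ} (ℓ : Fin k → ℕ) : ℕ :=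
  (Finset.univ.filter fun p : Fin k × Fin k =>
    (p.2 : ℕ) = (p.1 : ℕ) + 1 ∧ ℓ p.1 = ℓ p.2).card

/-!
The count `C(n + k - 1, k)` of weakly decreasing tuples follows Pascal's rule, splitting on whether
the largest entry `ℓ 0` equals `n`.

Precomposing with `Fin.predAbove m` duplicates entry `m` of a tuple, and it is a bijection from
the weakly decreasing `k`-tuples onto the weakly decreasing `(k + 1)`-tuples with
`ℓ m = ℓ (m + 1)`; its inverse deletes the repeated entry. Hence each of the `k - 1` adjacent
equalities of a `k`-tuple holds for `C(n + k - 2, k - 1)` tuples and each pair of distinct ones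
for `C(n + k - 3, k - 2)`. Double counting gives `∑ σ` and `∑ σ²` in terms of these binomial
coefficients, and `(n + k - 1) C(n + k - 2, k - 1) = k C(n + k - 1, k)` reduces both moments to
rational functions of `n` and `k`.
-/

open Finset

theorem mem_multisetTuples {n k : ℕ} {ℓ : Fin k → ℕ} :
    ℓ ∈ multisetTuples n k ↔ (∀ i, ℓ i ∈ Icc 1 n) ∧ Antitone ℓ := by
  simp [multisetTuples, Antitone]

theorem comp_mem_multisetTuples {n a b : ℕ} {ℓ : Fin b → ℕ} {f : Fin a → Fin b}
    (hℓ : ℓ ∈ multisetTuples n b) (hf : Monotone f) : ℓ ∘ f ∈ multisetTuples n a := by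
  rw [mem_multisetTuples] at hℓ ⊢
  exact ⟨fun i => hℓ.1 (f i), hℓ.2.comp_monotone hf⟩

theorem multisetTuples_zero_succ (k : ℕ) : multisetTuples 0 (k + 1) = ∅ := by
  ext ℓ
  simp only [mem_multisetTuples, notMem_empty, iff_false, not_and]
  intro h
  have := mem_Icc.mp (h 0)
  omega

theorem filter_head_ne_eq (n k : ℕ) :
    (multisetTuples (n + 1) (k + 1)).filter (fun ℓ => ℓ 0 ≠ n + 1) = multisetTuples n (k + 1) := by
  ext ℓ
  simp only [mem_filter, mem_multisetTuples, mem_Icc]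
  constructor
  · rintro ⟨⟨hrange, hanti⟩, hhead⟩
    refine ⟨fun i => ⟨(hrange i).1, ?_⟩, hanti⟩
    have := hanti (Fin.zero_le i)
    have := (hrange 0).2
    omega
  · rintro ⟨hrange, hanti⟩
    have := (hrange 0).2
    exact ⟨⟨fun i => ⟨(hrange i).1, (hrange i).2.trans n.le_succ⟩, hanti⟩, by omega⟩

theorem cons_mem_multisetTuples {n k : ℕ} {ℓ : Fin k → ℕ} (hℓ : ℓ ∈ multisetTuples n k)
    (hn : 1 ≤ n) : (Fin.cons n ℓ : Fin (k + 1) → ℕ) ∈ multisetTuples n (k + 1) := by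
  rw [mem_multisetTuples] at hℓ ⊢
  refine ⟨Fin.cases (by simpa using hn) (by simpa using hℓ.1), fun a b hab => ?_⟩
  induction b using Fin.cases with
  | zero => simp [Fin.le_zero_iff.mp hab]
  | succ b =>
    induction a using Fin.cases with
    | zero => simpa using (mem_Icc.mp (hℓ.1 b)).2
    | succ a => simpa using hℓ.2 (Fin.succ_le_succ_iff.mp hab)

theorem card_filter_head_eq (n k : ℕ) (hn : 1 ≤ n) :
    #((multisetTuples n (k + 1)).filter (fun ℓ => ℓ 0 = n)) = #(multisetTuples n k) := by
  refine card_nbij' Fin.tail (fun ℓ => (Fin.cons n ℓ : Fin (k + 1) → ℕ)) (fun ℓ hℓ => ?_)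
    (fun ℓ hℓ => ?_) (fun ℓ hℓ => ?_) (fun ℓ _ => Fin.tail_cons _ _)
  · exact comp_mem_multisetTuples (mem_filter.mp hℓ).1 (Fin.strictMono_succ.monotone)
  · exact mem_filter.mpr ⟨cons_mem_multisetTuples hℓ hn, rfl⟩
  · rw [← (mem_filter.mp hℓ).2]
    exact Fin.cons_self_tail ℓ

theorem card_multisetTuples (n k : ℕ) : #(multisetTuples n k) = (n + k - 1).choose k := by
  induction k generalizing n with
  | zero => simp [multisetTuples]
  | succ k ihk =>
    induction n with
    | zero => simp [multisetTuples_zero_succ]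
    | succ n ihn =>
      rw [← card_filter_add_card_filter_not (fun ℓ => ℓ 0 = n + 1),
        card_filter_head_eq _ _ (by omega), filter_head_ne_eq, ihk, ihn, show n + 1 + (k + 1) - 1 = (n + k) + 1 by omega,
        Nat.choose_succ_succ]
      congr 2
      omega

theorem card_filter_castSucc_eq_succ_and (n : ℕ) {k : ℕ} (m : Fin k) (p : (Fin (k + 1) → ℕ) → Prop)
    [DecidablePred p] :
    #((multisetTuples n (k + 1)).filter fun ℓ => ℓ m.castSucc = ℓ m.succ ∧ p ℓ) =
      #((multisetTuples n k).filter fun ℓ => p (ℓ ∘ m.predAbove)) := by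
  have hinv : ∀ ℓ : Fin (k + 1) → ℕ, ℓ m.castSucc = ℓ m.succ →
      (ℓ ∘ m.castSucc.succAbove) ∘ m.predAbove = ℓ := by
    intro ℓ htie
    funext i
    by_cases hi : i = m.castSucc
    · simp [hi, htie]
    · simp [Fin.succAbove_predAbove hi]
  refine card_nbij' (· ∘ m.castSucc.succAbove) (· ∘ m.predAbove) (fun ℓ hℓ => ?_)
    (fun ℓ hℓ => ?_) (fun ℓ hℓ => ?_) (fun ℓ _ => ?_)
  · obtain ⟨hmem, htie, hp⟩ := mem_filter.mp hℓ
    exact mem_filter.mpr ⟨comp_mem_multisetTuples hmem (Fin.strictMono_succAbove _).monotone,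
      by rwa [hinv ℓ htie]⟩
  · obtain ⟨hmem, hp⟩ := mem_filter.mp hℓ
    exact mem_filter.mpr ⟨comp_mem_multisetTuples hmem (Fin.predAbove_right_monotone m),
      by simp, hp⟩
  · exact hinv ℓ (mem_filter.mp hℓ).2.1
  · funext i
    simp

theorem card_filter_castSucc_eq_succ (n : ℕ) {k : ℕ} (m : Fin k) :
    #((multisetTuples n (k + 1)).filter fun ℓ => ℓ m.castSucc = ℓ m.succ) =
      #(multisetTuples n k) := by
  simpa using card_filter_castSucc_eq_succ_and n m fun _ => True

theorem card_filter_castSucc_eq_succ_of_ne (n : ℕ) {k : ℕ} {m m' : Fin (k + 1)} (hm : m ≠ m') :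
    #((multisetTuples n (k + 2)).filter fun ℓ =>
        ℓ m.castSucc = ℓ m.succ ∧ ℓ m'.castSucc = ℓ m'.succ) =
      #(multisetTuples n k) := by
  wlog hlt : m < m' generalizing m m'
  · simpa only [and_comm] using this hm.symm (lt_of_le_of_ne (not_lt.mp hlt) hm.symm)
  obtain ⟨m₀, rfl⟩ := Fin.exists_castSucc_eq.mpr (Fin.ne_last_of_lt hlt)
  have hsucc : m₀.succ ≤ m' := Fin.castSucc_lt_iff_succ_le.mp hlt
  calc _ = #((multisetTuples n (k + 2)).filter fun ℓ =>
          ℓ m'.castSucc = ℓ m'.succ ∧ ℓ m₀.castSucc.castSucc = ℓ m₀.castSucc.succ) := by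
        simp only [and_comm]
    _ = #((multisetTuples n (k + 1)).filter fun ℓ => ℓ m₀.castSucc = ℓ m₀.succ) := by
        rw [card_filter_castSucc_eq_succ_and]
        congr 1
        refine filter_congr fun ℓ _ => ?_
        rw [Function.comp_apply, Function.comp_apply, Fin.succ_castSucc,
          Fin.predAbove_castSucc_of_le _ _ hlt.le, Fin.predAbove_castSucc_of_le _ _ hsucc]
    _ = _ := card_filter_castSucc_eq_succ n m₀

theorem sigmaEq_eq_card_filter {k : ℕ} (ℓ : Fin (k + 1) → ℕ) :
    sigmaEq ℓ = #{m : Fin k | ℓ m.castSucc = ℓ m.succ} := by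
  symm
  refine card_bij (fun m _ => (m.castSucc, m.succ)) (fun m hm => ?_)
    (fun m _ m' _ h => Fin.castSucc_injective _ (congrArg Prod.fst h)) (fun p hp => ?_)
  · simpa using hm
  · obtain ⟨hnext, htie⟩ := (mem_filter.mp hp).2
    have hlast : p.1 ≠ Fin.last k := fun h => by
      have := p.2.isLt
      rw [h, Fin.val_last] at hnext
      omega
    have hsucc : (p.1.castPred hlast).succ = p.2 := Fin.ext (by simp [hnext])
    exact ⟨p.1.castPred hlast, by simpa [hsucc] using htie,
      Prod.ext (Fin.castSucc_castPred _ _) hsucc⟩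

theorem sigmaEq_sq_eq_card_filter {k : ℕ} (ℓ : Fin (k + 1) → ℕ) :
    sigmaEq ℓ ^ 2 =
      #{p : Fin k × Fin k | ℓ p.1.castSucc = ℓ p.1.succ ∧ ℓ p.2.castSucc = ℓ p.2.succ} := by
  rw [sigmaEq_eq_card_filter, sq, ← card_product, ← filter_product, univ_product_univ]

theorem sum_sigmaEq (n k : ℕ) :
    ∑ ℓ ∈ multisetTuples n (k + 1), sigmaEq ℓ = k * #(multisetTuples n k) := by
  calc _ = ∑ ℓ ∈ multisetTuples n (k + 1), #{m : Fin k | ℓ m.castSucc = ℓ m.succ} :=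
        sum_congr rfl fun ℓ _ => sigmaEq_eq_card_filter ℓ
    _ = ∑ m : Fin k, #((multisetTuples n (k + 1)).filter fun ℓ => ℓ m.castSucc = ℓ m.succ) :=
        sum_card_bipartiteAbove_eq_sum_card_bipartiteBelow _
    _ = _ := by simp [card_filter_castSucc_eq_succ]

theorem sum_sigmaEq_sq (n k : ℕ) :
    ∑ ℓ ∈ multisetTuples n (k + 2), sigmaEq ℓ ^ 2 =
      (k + 1) * #(multisetTuples n (k + 1)) + (k + 1) * k * #(multisetTuples n k) := by
  calc _ = ∑ ℓ ∈ multisetTuples n (k + 2), #{p : Fin (k + 1) × Fin (k + 1) |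
          ℓ p.1.castSucc = ℓ p.1.succ ∧ ℓ p.2.castSucc = ℓ p.2.succ} :=
        sum_congr rfl fun ℓ _ => sigmaEq_sq_eq_card_filter ℓ
    _ = ∑ p : Fin (k + 1) × Fin (k + 1), #((multisetTuples n (k + 2)).filter fun ℓ =>
          ℓ p.1.castSucc = ℓ p.1.succ ∧ ℓ p.2.castSucc = ℓ p.2.succ) :=
        sum_card_bipartiteAbove_eq_sum_card_bipartiteBelow _
    _ = ∑ p : Fin (k + 1) × Fin (k + 1),
          if p.1 = p.2 then #(multisetTuples n (k + 1)) else #(multisetTuples n k) := by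
        refine sum_congr rfl fun p _ => ?_
        split_ifs with h
        · simp [h, card_filter_castSucc_eq_succ]
        · exact card_filter_castSucc_eq_succ_of_ne n h
    _ = _ := by
        rw [Fintype.sum_prod_type]
        simp [sum_ite, filter_eq, filter_ne, card_erase_of_mem]
        ring

theorem card_multisetTuples_mul_add {n : ℕ} (hn : 1 ≤ n) (k : ℕ) :
    #(multisetTuples n k) * (n + k) = #(multisetTuples n (k + 1)) * (k + 1) := by
  rw [card_multisetTuples, card_multisetTuples, show n + (k + 1) - 1 = n + k - 1 + 1 by omega,
    ← Nat.add_one_mul_choose_eq, mul_comm]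
  congr 1
  omega

theorem sigma_mean_and_variance_general (n k : ℕ) (hn : 1 ≤ n) :
    (∑ ℓ ∈ multisetTuples n k, (sigmaEq ℓ : ℝ)) / ((n + k - 1).choose k : ℝ) =
      (k : ℝ) * ((k : ℝ) - 1) / ((n : ℝ) + (k : ℝ) - 1) ∧
    (∑ ℓ ∈ multisetTuples n k, (sigmaEq ℓ : ℝ) ^ 2) / ((n + k - 1).choose k : ℝ) -
        ((k : ℝ) * ((k : ℝ) - 1) / ((n : ℝ) + (k : ℝ) - 1)) ^ 2 =
      (k : ℝ) * ((k : ℝ) - 1) * (n : ℝ) * ((n : ℝ) - 1) /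
        (((n : ℝ) + (k : ℝ) - 1) ^ 2 * ((n : ℝ) + (k : ℝ) - 2)) := by
  rcases k with _ | _ | k
  · simp [sigmaEq]
  · simp [sigmaEq]
  have hN1 : (#(multisetTuples n (k + 1)) : ℝ) =
      #(multisetTuples n (k + 2)) * (k + 2) / (n + k + 1) := by
    rw [eq_div_iff (by positivity)]
    exact_mod_cast card_multisetTuples_mul_add hn (k + 1)
  have hN0 : (#(multisetTuples n k) : ℝ) = #(multisetTuples n (k + 1)) * (k + 1) / (n + k) := by
    rw [eq_div_iff (by positivity)]
    exact_mod_cast card_multisetTuples_mul_add hn k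
  have hpos : (0 : ℝ) < #(multisetTuples n (k + 2)) := by
    rw [card_multisetTuples]
    exact_mod_cast Nat.choose_pos (by omega)
  have hsum : ∑ ℓ ∈ multisetTuples n (k + 2), (sigmaEq ℓ : ℝ) =
      (k + 1) * #(multisetTuples n (k + 1)) := by
    exact_mod_cast sum_sigmaEq n (k + 1)
  have hsum_sq : ∑ ℓ ∈ multisetTuples n (k + 2), (sigmaEq ℓ : ℝ) ^ 2 =
      (k + 1) * #(multisetTuples n (k + 1)) + (k + 1) * k * #(multisetTuples n k) := by
    exact_mod_cast sum_sigmaEq_sq n k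
  rw [← card_multisetTuples, hsum, hsum_sq]
  push_cast
  rw [hN0, hN1, show (n : ℝ) + (k + 1 + 1) - 1 = n + k + 1 by ring,
    show (n : ℝ) + (k + 1 + 1) - 2 = n + k by ring]
  constructor
  · field_simp
    ring
  · field_simp
    ring

theorem sigma_mean_and_variance (n k : ℕ) (hn : 1 ≤ n) (hk : 1 ≤ k) :
    (∑ ℓ ∈ multisetTuples n k, (sigmaEq ℓ : ℝ)) / ((n + k - 1).choose k : ℝ) =
      (k : ℝ) * ((k : ℝ) - 1) / ((n : ℝ) + (k : ℝ) - 1) ∧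
    (∑ ℓ ∈ multisetTuples n k, (sigmaEq ℓ : ℝ) ^ 2) / ((n + k - 1).choose k : ℝ) -
        ((k : ℝ) * ((k : ℝ) - 1) / ((n : ℝ) + (k : ℝ) - 1)) ^ 2 =
      (k : ℝ) * ((k : ℝ) - 1) * (n : ℝ) * ((n : ℝ) - 1) /
        (((n : ℝ) + (k : ℝ) - 1) ^ 2 * ((n : ℝ) + (k : ℝ) - 2)) :=
  sigma_mean_and_variance_general n k hn
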